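/- arXiv:1302.5273 — 3 statements merged into one kernel-verified Lean document; each statement's English description precedes it below -/
import Mathlib

section
/- Let g be a nondegenerate symmetric bilinear form on a finite-dimensional real vector space V and A : V → V a g-selfadjoint endomorphism. If ρ ∈ ℝ is an eigenvalue of A whose algebraic multiplicity (as a root of the characteristic polynomial) equals 1, then every eigenvector u of A with eigenvalue ρ satisfies g(u,u) ≠ 0. -/
/-!
Put `B = A - μ • 1`. The generalized eigenspace of `A` at `μ` has dimension the multiplicity of `μ`
as a root of the characteristic polynomial, so here it is the line `K ∙ u`, and Fitting's
decomposition of `V` with respect to `B` gives `V = K ∙ u ⊔ range B`. Self-adjointness makes `u`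
orthogonal to `range B`, because `g u (B x) = g (B u) x = 0`. If moreover `g u u = 0`, then `u` is
orthogonal to all of `V`, and nondegeneracy forces `u = 0`.
-/

namespace Module.End

variable {K V : Type*} [Field K] [AddCommGroup V] [Module K V] [FiniteDimensional K V]

theorem maxGenEigenspace_sup_range_sub_smul_eq_top (A : End K V) (μ : K) :
    A.maxGenEigenspace μ ⊔ LinearMap.range (A - μ • 1) = ⊤ := by
  have hfitting := (LinearMap.isCompl_iSup_ker_pow_iInf_range_pow (A - μ • 1)).sup_eq_top
  rw [eq_top_iff, ← hfitting]
  refine sup_le_sup (le_of_eq ?_) ?_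
  · rw [maxGenEigenspace_eq_maxGenEigenspace_zero, ← iSup_genEigenspace_eq]
    simp only [genEigenspace_nat, zero_smul, sub_zero]
  · exact iInf_le_of_le 1 (by rw [pow_one])

theorem maxGenEigenspace_eq_span_singleton {A : End K V} {μ : K}
    (hmult : A.charpoly.rootMultiplicity μ = 1) {u : V} (hu0 : u ≠ 0) (hu : A u = μ • u) :
    A.maxGenEigenspace μ = K ∙ u := by
  symm
  apply Submodule.eq_of_le_of_finrank_le
  · rw [Submodule.span_singleton_le_iff_mem]
    exact eigenspace_le_maxGenEigenspace (mem_eigenspace_iff.mpr hu)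
  · rw [LinearMap.finrank_maxGenEigenspace_eq, hmult, finrank_span_singleton hu0]

end Module.End

namespace LinearMap.IsAdjointPair

variable {K V : Type*} [CommRing K] [AddCommGroup V] [Module K V]

theorem apply_eq_zero_of_mem_range_sub_smul {g : LinearMap.BilinForm K V} {A : V →ₗ[K] V}
    (hA : g.IsAdjointPair g A A) {μ : K} {u : V} (hu : A u = μ • u) {y : V}
    (hy : y ∈ LinearMap.range (A - μ • 1)) : g u y = 0 := by
  obtain ⟨x, rfl⟩ := hy
  calc g u ((A - μ • 1) x) = g (A u) x - μ * g u x := by simp [hA u x]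
    _ = 0 := by simp [hu]

end LinearMap.IsAdjointPair

theorem LinearMap.BilinForm.apply_self_ne_zero_of_rootMultiplicity_eq_one
    {K V : Type*} [Field K] [AddCommGroup V] [Module K V] [FiniteDimensional K V]
    {g : LinearMap.BilinForm K V} (hg : g.SeparatingLeft) {A : V →ₗ[K] V}
    (hA : g.IsAdjointPair g A A) {μ : K} (hmult : A.charpoly.rootMultiplicity μ = 1)
    {u : V} (hu0 : u ≠ 0) (hu : A u = μ • u) :
    g u u ≠ 0 := by
  intro hguu
  refine hu0 (hg u fun y ↦ ?_)
  have hy : y ∈ (K ∙ u) ⊔ LinearMap.range (A - μ • 1) := by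
    rw [← Module.End.maxGenEigenspace_eq_span_singleton hmult hu0 hu,
      Module.End.maxGenEigenspace_sup_range_sub_smul_eq_top]
    trivial
  obtain ⟨_, hcu, w, hw, rfl⟩ := Submodule.mem_sup.mp hy
  obtain ⟨c, rfl⟩ := Submodule.mem_span_singleton.mp hcu
  rw [map_add, map_smul, hguu, smul_zero, zero_add]
  exact hA.apply_eq_zero_of_mem_range_sub_smul hu hw

theorem stmt_3_general (V : Type*) [AddCommGroup V] [Module ℝ V] [FiniteDimensional ℝ V]
    (g : LinearMap.BilinForm ℝ V)
    (hgnd : ∀ x, (∀ y, g x y = 0) → x = 0)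
    (A : V →ₗ[ℝ] V)
    (hA : ∀ x y, g (A x) y = g x (A y))
    (ρ : ℝ)
    (hmult : (LinearMap.charpoly A).rootMultiplicity ρ = 1)
    (u : V) (hu0 : u ≠ 0) (hu : A u = ρ • u) :
    g u u ≠ 0 :=
  LinearMap.BilinForm.apply_self_ne_zero_of_rootMultiplicity_eq_one hgnd hA hmult hu0 hu

theorem stmt_3 (V : Type*) [AddCommGroup V] [Module ℝ V] [FiniteDimensional ℝ V]
    (g : LinearMap.BilinForm ℝ V)
    (hgsymm : ∀ x y, g x y = g y x)
    (hgnd : ∀ x, (∀ y, g x y = 0) → x = 0)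
    (A : V →ₗ[ℝ] V)
    (hA : ∀ x y, g (A x) y = g x (A y))
    (ρ : ℝ)
    (hmult : (LinearMap.charpoly A).rootMultiplicity ρ = 1)
    (u : V) (hu0 : u ≠ 0) (hu : A u = ρ • u) :
    g u u ≠ 0 :=
  stmt_3_general V g hgnd A hA ρ hmult u hu0 hu
end

section
/- Let g be a nondegenerate symmetric bilinear form on a 4-dimensional real vector space V and let R be an algebraic curvature tensor on (V,g) (i.e., R_{ijkl} is antisymmetric in the first and last pairs, symmetric under exchange of the pairs, and satisfies the first Bianchi identity). Suppose there exist linearly independent vectors u, v ∈ V with the restriction of g to span(u,v) nondegenerate, such that R(u,·,·,·) = 0 and R(v,·,·,·) = 0. If the scalar curvature g^{ik} g^{jl} R_{ijkl} vanishes, then R = 0. -/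
/-!
Complete `u, v` by a basis `s, t` of the `g`-orthogonal complement of `span {u, v}`. In the basis
`u, v, s, t` the tensor vanishes as soon as one index is `u` or `v`, so by its symmetries it is
`κ (s ∧ t) ⊗ (s ∧ t)` with `κ = R(s, t, s, t)`; since the metric is block diagonal in this basis,
the scalar curvature, which does not depend on the basis, equals `2κ / det (g|span {s, t})`, so
`κ = 0`.
-/

open Matrix
open scoped Kronecker

structure HasCurvatureSymmetries {ι : Type*} (R : ι → ι → ι → ι → ℝ) : Prop where
  antisymm_left : ∀ i j k l, R i j k l = - R j i k l
  antisymm_right : ∀ i j k l, R i j k l = - R i j l k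
  pair_symm : ∀ i j k l, R i j k l = R k l i j

namespace HasCurvatureSymmetries

variable {ι : Type*} {S : ι → ι → ι → ι → ℝ}

lemma apply_self_left (hS : HasCurvatureSymmetries S) (i k l : ι) : S i i k l = 0 := by
  linarith [hS.antisymm_left i i k l]

lemma apply_self_right (hS : HasCurvatureSymmetries S) (i j k : ι) : S i j k k = 0 := by
  linarith [hS.antisymm_right i j k k]

lemma apply_eq_zero_of_null_left (hS : HasCurvatureSymmetries S) {a : ι}
    (h : ∀ b c d, S a b c d = 0) (b c d : ι) : S b a c d = 0 ∧ S c d a b = 0 ∧ S c d b a = 0 := by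
  refine ⟨?_, ?_, ?_⟩
  · rw [hS.antisymm_left, h, neg_zero]
  · rw [hS.pair_symm, h]
  · rw [hS.antisymm_right, hS.pair_symm, h, neg_zero]

end HasCurvatureSymmetries

section CurvatureTensor

variable {ι : Type*}

/- Viewing a 4-tensor as a matrix indexed by pairs turns a change of basis into conjugation by
`T ⊗ₖ T` and the scalar curvature into a trace, which spares all reordering of fourfold sums. -/
def pairMatrix (R : ι → ι → ι → ι → ℝ) : Matrix (ι × ι) (ι × ι) ℝ :=
  of fun p q => R p.1 p.2 q.1 q.2

lemma pairMatrix_injective : Function.Injective (pairMatrix (ι := ι)) := by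
  intro R S h
  funext i j k l
  exact congrFun (congrFun h (i, j)) (k, l)

variable [Fintype ι]

def scalarCurvature (gInv : Matrix ι ι ℝ) (R : ι → ι → ι → ι → ℝ) : ℝ :=
  ∑ i, ∑ j, ∑ k, ∑ l, gInv i k * gInv j l * R i j k l

def basisChange (T : Matrix ι ι ℝ) (R : ι → ι → ι → ι → ℝ) : ι → ι → ι → ι → ℝ :=
  fun a b c d => ∑ i, ∑ j, ∑ k, ∑ l, T a i * T b j * T c k * T d l * R i j k l

lemma pairMatrix_basisChange (T : Matrix ι ι ℝ) (R : ι → ι → ι → ι → ℝ) :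
    pairMatrix (basisChange T R) = (T ⊗ₖ T) * pairMatrix R * (T ⊗ₖ T)ᵀ := by
  ext ⟨a, b⟩ ⟨c, d⟩
  simp only [mul_apply, Finset.sum_mul]
  rw [Finset.sum_comm]
  simp only [pairMatrix, basisChange, Fintype.sum_prod_type, kroneckerMap_apply, of_apply,
    transpose_apply]
  congr! 4
  ring

lemma scalarCurvature_eq_trace (gInv : Matrix ι ι ℝ) (R : ι → ι → ι → ι → ℝ) :
    scalarCurvature gInv R = trace ((gInv ⊗ₖ gInv) * (pairMatrix R)ᵀ) := by
  simp [scalarCurvature, trace, mul_apply, Fintype.sum_prod_type, pairMatrix]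

lemma scalarCurvature_basisChange (gInv T : Matrix ι ι ℝ) (R : ι → ι → ι → ι → ℝ) :
    scalarCurvature gInv (basisChange T R) = scalarCurvature (Tᵀ * gInv * T) R := by
  have hK : (T ⊗ₖ T)ᵀ * (gInv ⊗ₖ gInv) * (T ⊗ₖ T) = (Tᵀ * gInv * T) ⊗ₖ (Tᵀ * gInv * T) := by
    rw [mul_kronecker_mul, mul_kronecker_mul, kroneckerMap_transpose]
  rw [scalarCurvature_eq_trace, scalarCurvature_eq_trace, pairMatrix_basisChange, ← hK,
    transpose_mul, transpose_mul, transpose_transpose, ← Matrix.mul_assoc, ← Matrix.mul_assoc,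
    trace_mul_comm, ← Matrix.mul_assoc, ← Matrix.mul_assoc]

lemma scalarCurvature_basisChange_inv [DecidableEq ι] (g : Matrix ι ι ℝ) {T : Matrix ι ι ℝ}
    (hT : IsUnit T.det) (R : ι → ι → ι → ι → ℝ) :
    scalarCurvature (T * g * Tᵀ)⁻¹ (basisChange T R) = scalarCurvature g⁻¹ R := by
  have hTt : IsUnit Tᵀ.det := by rwa [det_transpose]
  rw [scalarCurvature_basisChange, Matrix.mul_inv_rev, Matrix.mul_inv_rev, ← Matrix.mul_assoc,
    ← Matrix.mul_assoc, mul_nonsing_inv _ hTt, Matrix.one_mul, Matrix.mul_assoc,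
    nonsing_inv_mul _ hT, Matrix.mul_one]

lemma basisChange_mul (S T : Matrix ι ι ℝ) (R : ι → ι → ι → ι → ℝ) :
    basisChange (S * T) R = basisChange S (basisChange T R) := by
  apply pairMatrix_injective
  simp only [pairMatrix_basisChange, mul_kronecker_mul, transpose_mul, Matrix.mul_assoc]

lemma basisChange_one [DecidableEq ι] (R : ι → ι → ι → ι → ℝ) : basisChange 1 R = R := by
  apply pairMatrix_injective
  rw [pairMatrix_basisChange, one_kronecker_one, transpose_one, Matrix.one_mul, Matrix.mul_one]

lemma eq_zero_of_basisChange_eq_zero [DecidableEq ι] {T : Matrix ι ι ℝ} (hT : IsUnit T.det)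
    {R : ι → ι → ι → ι → ℝ} (h : basisChange T R = 0) : R = 0 := by
  rw [← basisChange_one R, ← nonsing_inv_mul T hT, basisChange_mul, h]
  funext a b c d
  simp [basisChange]

lemma HasCurvatureSymmetries.basisChange {R : ι → ι → ι → ι → ℝ} (hR : HasCurvatureSymmetries R)
    (T : Matrix ι ι ℝ) : HasCurvatureSymmetries (basisChange T R) where
  antisymm_left a b c d := by
    simp only [_root_.basisChange, ← Finset.sum_neg_distrib]
    rw [Finset.sum_comm]
    refine Finset.sum_congr rfl fun i _ => Finset.sum_congr rfl fun j _ =>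
      Finset.sum_congr rfl fun k _ => Finset.sum_congr rfl fun l _ => ?_
    rw [hR.antisymm_left]; ring
  antisymm_right a b c d := by
    simp only [_root_.basisChange, ← Finset.sum_neg_distrib]
    refine Finset.sum_congr rfl fun i _ => Finset.sum_congr rfl fun j _ => ?_
    rw [Finset.sum_comm]
    refine Finset.sum_congr rfl fun k _ => Finset.sum_congr rfl fun l _ => ?_
    rw [hR.antisymm_right]; ring
  pair_symm a b c d := by
    have hM : (pairMatrix R)ᵀ = pairMatrix R := ext fun p q => (hR.pair_symm _ _ _ _).symm
    have hM' : (pairMatrix (_root_.basisChange T R))ᵀ = pairMatrix (_root_.basisChange T R) := by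
      rw [pairMatrix_basisChange, transpose_mul, transpose_mul, transpose_transpose, hM,
        Matrix.mul_assoc]
    exact congrFun (congrFun hM' (c, d)) (a, b)

lemma basisChange_apply_eq_zero_of_null (T : Matrix ι ι ℝ) {R : ι → ι → ι → ι → ℝ} {a : ι}
    (h : ∀ j k l, ∑ i, T a i * R i j k l = 0) (b c d : ι) : basisChange T R a b c d = 0 := by
  have hrow : ∀ q, ((T ⊗ₖ T) * pairMatrix R) (a, b) q = 0 := by
    intro q
    simp only [mul_apply, Fintype.sum_prod_type, kroneckerMap_apply, pairMatrix, of_apply]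
    rw [Finset.sum_comm]
    refine Finset.sum_eq_zero fun j _ => ?_
    rw [← mul_zero (T b j), ← h j q.1 q.2, Finset.mul_sum]
    exact Finset.sum_congr rfl fun i _ => by ring
  change pairMatrix (basisChange T R) (a, b) (c, d) = 0
  rw [pairMatrix_basisChange, mul_apply]
  simp [hrow]

end CurvatureTensor

def areaForm₂₃ : Matrix (Fin 4) (Fin 4) ℝ := !![0, 0, 0, 0; 0, 0, 0, 0; 0, 0, 0, 1; 0, 0, -1, 0]

lemma HasCurvatureSymmetries.eq_mul_areaForm₂₃ {S : Fin 4 → Fin 4 → Fin 4 → Fin 4 → ℝ}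
    (hS : HasCurvatureSymmetries S) (h₀ : ∀ b c d, S 0 b c d = 0) (h₁ : ∀ b c d, S 1 b c d = 0) :
    S = fun i j k l => S 2 3 2 3 * (areaForm₂₃ i j * areaForm₂₃ k l) := by
  have h₀' := hS.apply_eq_zero_of_null_left h₀
  have h₁' := hS.apply_eq_zero_of_null_left h₁
  have h32 : ∀ k l, S 3 2 k l = - S 2 3 k l := hS.antisymm_left 3 2
  have h32' : ∀ i j, S i j 3 2 = - S i j 2 3 := fun i j => hS.antisymm_right i j 3 2
  funext i j k l
  fin_cases i <;> fin_cases j <;> fin_cases k <;> fin_cases l <;>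
    simp [areaForm₂₃, h₀, h₁, (h₀' _ _ _).1, (h₀' _ _ _).2.1, (h₀' _ _ _).2.2, (h₁' _ _ _).1,
      (h₁' _ _ _).2.1, (h₁' _ _ _).2.2, hS.apply_self_left, hS.apply_self_right, h32, h32']

lemma scalarCurvature_mul_areaForm₂₃ (gInv : Matrix (Fin 4) (Fin 4) ℝ) (κ : ℝ) :
    scalarCurvature gInv (fun i j k l => κ * (areaForm₂₃ i j * areaForm₂₃ k l)) =
      2 * κ * (gInv 2 2 * gInv 3 3 - gInv 2 3 * gInv 3 2) := by
  simp [scalarCurvature, Fin.sum_univ_four, areaForm₂₃]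
  ring

lemma inv_det_lowerRight_ne_zero {G : Matrix (Fin 4) (Fin 4) ℝ} (hG : IsUnit G.det)
    (h02 : G 0 2 = 0) (h03 : G 0 3 = 0) (h12 : G 1 2 = 0) (h13 : G 1 3 = 0) :
    G⁻¹ 2 2 * G⁻¹ 3 3 - G⁻¹ 2 3 * G⁻¹ 3 2 ≠ 0 := by
  have hblock : !![G⁻¹ 2 2, G⁻¹ 2 3; G⁻¹ 3 2, G⁻¹ 3 3] * !![G 2 2, G 2 3; G 3 2, G 3 3] = 1 := by
    have hinv (a b : Fin 4) : ∑ m, G⁻¹ a m * G m b = (1 : Matrix (Fin 4) (Fin 4) ℝ) a b := by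
      rw [← mul_apply, nonsing_inv_mul G hG]
    ext a b
    fin_cases a <;> fin_cases b
    · simpa [Fin.sum_univ_four, h02, h12] using hinv 2 2
    · simpa [Fin.sum_univ_four, h03, h13] using hinv 2 3
    · simpa [Fin.sum_univ_four, h02, h12] using hinv 3 2
    · simpa [Fin.sum_univ_four, h03, h13] using hinv 3 3
  have hdet := congrArg det hblock
  rw [det_mul, det_one, det_fin_two_of, det_fin_two_of] at hdet
  exact left_ne_zero_of_mul_eq_one hdet

section GramPair

open LinearMap (BilinForm)
open Module Submodule

variable {K V : Type*} [Field K] [AddCommGroup V] [Module K V] {B : BilinForm K V} {u v : V}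

lemma coeffs_eq_zero_of_gram_det_ne_zero (hB : B.IsSymm) (hgram : B u u * B v v - B u v ^ 2 ≠ 0)
    {a b : K} (hu : B u (a • u + b • v) = 0) (hv : B v (a • u + b • v) = 0) : a = 0 ∧ b = 0 := by
  simp only [map_add, map_smul, smul_eq_mul, ← hB.eq u v] at hu hv
  constructor
  · exact (mul_eq_zero.1 (by linear_combination B v v * hu - B u v * hv)).resolve_right hgram
  · exact (mul_eq_zero.1 (by linear_combination B u u * hv - B u v * hu)).resolve_right hgram

lemma linearIndependent_pair_of_gram_det_ne_zero (hB : B.IsSymm)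
    (hgram : B u u * B v v - B u v ^ 2 ≠ 0) : LinearIndependent K ![u, v] :=
  LinearIndependent.pair_iff.2 fun a b h =>
    coeffs_eq_zero_of_gram_det_ne_zero hB hgram (by rw [h, map_zero]) (by rw [h, map_zero])

lemma disjoint_span_pair_orthogonal (hB : B.IsSymm) (hgram : B u u * B v v - B u v ^ 2 ≠ 0) :
    Disjoint (span K {u, v}) (B.orthogonal (span K {u, v})) := by
  rw [disjoint_iff_inf_le]
  rintro x ⟨hxW, hxW'⟩
  obtain ⟨a, b, rfl⟩ := mem_span_pair.1 hxW
  have hab := coeffs_eq_zero_of_gram_det_ne_zero hB hgram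
    (hxW' u (subset_span (by simp))) (hxW' v (subset_span (by simp)))
  simp [hab.1, hab.2]

lemma exists_linearIndependent_orthogonal_pair [FiniteDimensional K V] (hV : finrank K V = 4)
    (hB : B.IsSymm) (hgram : B u u * B v v - B u v ^ 2 ≠ 0) :
    ∃ s t : V, LinearIndependent K ![u, v, s, t] ∧
      B u s = 0 ∧ B v s = 0 ∧ B u t = 0 ∧ B v t = 0 := by
  set W := span K {u, v}
  have huv := linearIndependent_pair_of_gram_det_ne_zero hB hgram
  have hcompl : IsCompl W (B.orthogonal W) :=
    (B.isCompl_orthogonal_iff_disjoint hB.isRefl).2 (disjoint_span_pair_orthogonal hB hgram)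
  have hW : finrank K W = 2 := by
    have := finrank_span_eq_card huv
    rwa [range_cons_cons_empty, Fintype.card_fin] at this
  have hW' : finrank K (B.orthogonal W) = 2 := by
    have := finrank_add_eq_of_isCompl hcompl
    omega
  set b := finBasisOfFinrankEq K (B.orthogonal W) hW'
  have hst (a c : K) (h : a • (b 0 : V) + c • (b 1 : V) = 0) : a = 0 ∧ c = 0 := by
    have := Fintype.linearIndependent_iff.1 b.linearIndependent ![a, c]
      (Subtype.ext (by simpa [Fin.sum_univ_two] using h))
    exact ⟨this 0, this 1⟩
  have hperp (x : V) (hx : x ∈ B.orthogonal W) : B u x = 0 ∧ B v x = 0 :=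
    ⟨hx u (subset_span (by simp)), hx v (subset_span (by simp))⟩
  refine ⟨b 0, b 1, ?_, (hperp _ (b 0).2).1, (hperp _ (b 0).2).2, (hperp _ (b 1).2).1,
    (hperp _ (b 1).2).2⟩
  rw [Fintype.linearIndependent_iff]
  intro c hc
  simp only [Fin.sum_univ_four, Matrix.cons_val] at hc
  set x := c 0 • u + c 1 • v
  have hx : x ∈ W ⊓ B.orthogonal W := by
    refine ⟨mem_span_pair.2 ⟨_, _, rfl⟩, ?_⟩
    rw [eq_neg_of_add_eq_zero_left (by rw [← hc]; abel : x + (c 2 • b 0 + c 3 • (b 1 : V)) = 0)]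
    exact neg_mem (add_mem (smul_mem _ _ (b 0).2) (smul_mem _ _ (b 1).2))
  rw [hcompl.inf_eq_bot, mem_bot] at hx
  obtain ⟨h0, h1⟩ := LinearIndependent.pair_iff.1 huv _ _ hx
  obtain ⟨h2, h3⟩ := hst (c 2) (c 3) (by simpa [x, h0, h1] using hc)
  intro i
  fin_cases i <;> assumption

end GramPair

theorem stmt_4_general (g : Matrix (Fin 4) (Fin 4) ℝ) (hgs : gᵀ = g) (hg : IsUnit g.det)
    (R : Fin 4 → Fin 4 → Fin 4 → Fin 4 → ℝ)
    (hR1 : ∀ i j k l, R i j k l = - R j i k l)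
    (hR2 : ∀ i j k l, R i j k l = - R i j l k)
    (hR3 : ∀ i j k l, R i j k l = R k l i j)
    (u v : Fin 4 → ℝ)
    (hnondeg : (∑ i, ∑ j, u i * g i j * u j) * (∑ i, ∑ j, v i * g i j * v j)
        - (∑ i, ∑ j, u i * g i j * v j) ^ 2 ≠ 0)
    (hu : ∀ j k l, ∑ i, u i * R i j k l = 0)
    (hv : ∀ j k l, ∑ i, v i * R i j k l = 0)
    (hscal : ∑ i, ∑ j, ∑ k, ∑ l, g⁻¹ i k * g⁻¹ j l * R i j k l = 0) :
    ∀ i j k l, R i j k l = 0 := by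
  obtain ⟨s, t, hindep, hus, hvs, hut, hvt⟩ :=
    exists_linearIndependent_orthogonal_pair (Module.finrank_fin_fun ℝ)
      (isSymm_toBilin'_iff_isSymm.2 hgs) (by simpa only [toBilin'_apply] using hnondeg)
  set T : Matrix (Fin 4) (Fin 4) ℝ := of ![u, v, s, t]
  have hT : IsUnit T.det := (isUnit_iff_isUnit_det T).1 (linearIndependent_rows_iff_isUnit.1 hindep)
  have hG : IsUnit (T * g * Tᵀ).det := by
    simp only [det_mul, det_transpose]; exact (hT.mul hg).mul hT
  have hGapply (a b : Fin 4) : (T * g * Tᵀ) a b = toBilin' g (T a) (T b) := by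
    rw [mul_mul_apply, transpose_transpose, toBilin'_apply']
  have hS := (HasCurvatureSymmetries.mk hR1 hR2 hR3).basisChange T
  have hS_form := hS.eq_mul_areaForm₂₃ (basisChange_apply_eq_zero_of_null T hu)
    (basisChange_apply_eq_zero_of_null T hv)
  have hblock := inv_det_lowerRight_ne_zero hG ((hGapply 0 2).trans hus) ((hGapply 0 3).trans hut)
    ((hGapply 1 2).trans hvs) ((hGapply 1 3).trans hvt)
  have hκ : basisChange T R 2 3 2 3 = 0 := by
    have h := scalarCurvature_basisChange_inv g hT R
    rw [hS_form, scalarCurvature_mul_areaForm₂₃] at h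
    simpa [hblock] using h.trans hscal
  have hR0 := eq_zero_of_basisChange_eq_zero hT (by rw [hS_form, hκ]; funext i j k l; simp)
  simp [hR0]

/-- STATEMENT 4, in coordinates with respect to a basis of the 4-dimensional space `V`:
`g` is the (invertible, symmetric) Gram matrix of the nondegenerate symmetric bilinear
form, `R` is an algebraic curvature tensor, `u`, `v` span a 2-plane on which `g` is
nondegenerate and which lies in the nullity of `R`.  Zero scalar curvature forces `R = 0`. -/
theorem stmt_4 (g : Matrix (Fin 4) (Fin 4) ℝ) (hgs : gᵀ = g) (hg : IsUnit g.det)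
    (R : Fin 4 → Fin 4 → Fin 4 → Fin 4 → ℝ)
    (hR1 : ∀ i j k l, R i j k l = - R j i k l)
    (hR2 : ∀ i j k l, R i j k l = - R i j l k)
    (hR3 : ∀ i j k l, R i j k l = R k l i j)
    (hbianchi : ∀ i j k l, R i j k l + R i k l j + R i l j k = 0)
    (u v : Fin 4 → ℝ)
    (hindep : LinearIndependent ℝ ![u, v])
    (hnondeg : (∑ i, ∑ j, u i * g i j * u j) * (∑ i, ∑ j, v i * g i j * v j)
        - (∑ i, ∑ j, u i * g i j * v j) ^ 2 ≠ 0)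
    (hu : ∀ j k l, ∑ i, u i * R i j k l = 0)
    (hv : ∀ j k l, ∑ i, v i * R i j k l = 0)
    (hscal : ∑ i, ∑ j, ∑ k, ∑ l, g⁻¹ i k * g⁻¹ j l * R i j k l = 0) :
    ∀ i j k l, R i j k l = 0 :=
  stmt_4_general g hgs hg R hR1 hR2 hR3 u v hnondeg hu hv hscal
end

section
/- Let (M,g) be a pseudo-Riemannian manifold of dimension n and let g̃ be the cone metric on M̃ = ℝ_{>0} × M given in coordinates (r,x) by g̃ = dr² + r² g. Suppose A is a symmetric (0,2)-tensor field on M̃ of the block form A = [[μ(x), −r λ(x)ᵀ],[−r λ(x), r² a(x)]] where μ is a function, λ a one-form, and a a symmetric (0,2)-tensor on M. If A is parallel with respect to the Levi-Civita connection of g̃, then (a, λ, μ) satisfies on M: ∇_k a_{ij} = λ_i g_{jk} + λ_j g_{ik}, ∇_j λ_i = μ g_{ij} − a_{ij}, and ∇_i μ = −2λ_i, where ∇ is the Levi-Civita connection of g. -/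
open Matrix

/-- Partial derivative in the `i`-th coordinate direction. -/
noncomputable def pd {m : ℕ} (f : (Fin m → ℝ) → ℝ) (i : Fin m) (x : Fin m → ℝ) : ℝ :=
  fderiv ℝ f x (Pi.single i 1)

/-- Christoffel symbols (second kind) of the Levi-Civita connection of `g`. -/
noncomputable def christoffel {m : ℕ} (g : (Fin m → ℝ) → Matrix (Fin m) (Fin m) ℝ)
    (l i j : Fin m) (x : Fin m → ℝ) : ℝ :=
  ∑ k, (g x)⁻¹ l k * ((1 : ℝ) / 2) *
    (pd (fun y => g y j k) i x + pd (fun y => g y i k) j x - pd (fun y => g y i j) k x)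

/-- Covariant derivative `ω_{i,j}` of a one-form w.r.t. the Levi-Civita connection of `g`. -/
noncomputable def covDerivOne {m : ℕ} (g : (Fin m → ℝ) → Matrix (Fin m) (Fin m) ℝ)
    (ω : Fin m → (Fin m → ℝ) → ℝ) (i j : Fin m) (x : Fin m → ℝ) : ℝ :=
  pd (ω i) j x - ∑ s, christoffel g s i j x * ω s x

/-- Covariant derivative `a_{ij,k}` of a (0,2)-tensor w.r.t. the Levi-Civita connection of `g`. -/
noncomputable def covDerivTwo {m : ℕ} (g : (Fin m → ℝ) → Matrix (Fin m) (Fin m) ℝ)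
    (a : Fin m → Fin m → (Fin m → ℝ) → ℝ) (i j k : Fin m) (x : Fin m → ℝ) : ℝ :=
  pd (a i j) k x - ∑ s, christoffel g s i k x * a s j x
    - ∑ s, christoffel g s j k x * a i s x

/-- The cone metric `g̃ = dr² + r² g` in the coordinates `z = (r, x)` on
`ℝ_{>0} × M`, where `r = z 0` and `x = z ∘ Fin.succ`. -/
noncomputable def coneMetric {n : ℕ} (g : (Fin n → ℝ) → Matrix (Fin n) (Fin n) ℝ)
    (z : Fin (n + 1) → ℝ) : Matrix (Fin (n + 1)) (Fin (n + 1)) ℝ :=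
  Matrix.of fun α β =>
    Fin.cases (Fin.cases (1 : ℝ) (fun _ => 0) β)
      (fun i => Fin.cases (0 : ℝ) (fun j => (z 0) ^ 2 * g (z ∘ Fin.succ) i j) β) α

/-- The symmetric (0,2)-tensor field `A = [[μ, −rλᵀ],[−rλ, r² a]]` on the cone. -/
noncomputable def coneTensor {n : ℕ} (a : Fin n → Fin n → (Fin n → ℝ) → ℝ)
    (lam : Fin n → (Fin n → ℝ) → ℝ) (μ : (Fin n → ℝ) → ℝ)
    (α β : Fin (n + 1)) (z : Fin (n + 1) → ℝ) : ℝ :=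
  Fin.cases (Fin.cases (μ (z ∘ Fin.succ)) (fun j => -(z 0) * lam j (z ∘ Fin.succ)) β)
    (fun i => Fin.cases (-(z 0) * lam i (z ∘ Fin.succ))
      (fun j => (z 0) ^ 2 * a i j (z ∘ Fin.succ)) β) α

section calc1
variable {m : ℕ}

lemma pd_const (c : ℝ) (i : Fin m) (x) : pd (fun _ => c) i x = 0 := by
  simp [pd]

lemma pd_mul {u v : (Fin m → ℝ) → ℝ} {x} (hu : DifferentiableAt ℝ u x)
    (hv : DifferentiableAt ℝ v x) (i : Fin m) :
    pd (fun y => u y * v y) i x = pd u i x * v x + u x * pd v i x := by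
  simp only [pd]
  rw [fderiv_fun_mul hu hv]
  simp
  ring

lemma pd_proj (j i : Fin m) (x) : pd (fun y : Fin m → ℝ => y j) i x = (Pi.single i 1 : Fin m → ℝ) j := by
  rw [pd, show (fun y : Fin m → ℝ => y j)
      = (ContinuousLinearMap.proj j : (Fin m → ℝ) →L[ℝ] ℝ) from rfl,
    ContinuousLinearMap.fderiv]
  rfl

end calc1

noncomputable def lower (n : ℕ) : (Fin (n+1) → ℝ) →L[ℝ] (Fin n → ℝ) :=
  ContinuousLinearMap.pi fun i => ContinuousLinearMap.proj i.succ

section calc2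
variable {n : ℕ}

lemma pd_comp {f : (Fin n → ℝ) → ℝ} (hf : Differentiable ℝ f) (i : Fin (n+1)) (z) :
    pd (fun z : Fin (n+1) → ℝ => f (z ∘ Fin.succ)) i z
      = fderiv ℝ f (z ∘ Fin.succ) (Pi.single i 1 ∘ Fin.succ) := by
  have h1 : (fun z : Fin (n+1) → ℝ => f (z ∘ Fin.succ)) = f ∘ (lower n) := rfl
  rw [pd, h1, fderiv_comp (x := z) (hf _) (lower n).differentiableAt, (lower n).fderiv]
  rfl

lemma single_succ_comp (k : Fin n) :
    (Pi.single (Fin.succ k) (1:ℝ)) ∘ Fin.succ = Pi.single k 1 := by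
  funext j
  simp only [Function.comp]
  by_cases h : j = k
  · subst h; simp
  · rw [Pi.single_eq_of_ne h, Pi.single_eq_of_ne (fun hh => h (Fin.succ_injective _ hh))]

lemma single_zero_comp : (Pi.single (0 : Fin (n+1)) (1:ℝ)) ∘ Fin.succ = 0 := by
  funext j
  simp [Function.comp, Pi.single_eq_of_ne (Fin.succ_ne_zero j)]

lemma pd_comp_succ {f : (Fin n → ℝ) → ℝ} (hf : Differentiable ℝ f) (k : Fin n) (z) :
    pd (fun z : Fin (n+1) → ℝ => f (z ∘ Fin.succ)) k.succ z = pd f k (z ∘ Fin.succ) := by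
  rw [pd_comp hf, single_succ_comp]; rfl

lemma pd_comp_zero {f : (Fin n → ℝ) → ℝ} (hf : Differentiable ℝ f) (z) :
    pd (fun z : Fin (n+1) → ℝ => f (z ∘ Fin.succ)) 0 z = 0 := by
  rw [pd_comp hf, single_zero_comp, map_zero]

lemma diff_comp {f : (Fin n → ℝ) → ℝ} (hf : Differentiable ℝ f) :
    Differentiable ℝ (fun z : Fin (n+1) → ℝ => f (z ∘ Fin.succ)) :=
  hf.comp (lower n).differentiable

lemma diff_proj0 : Differentiable ℝ (fun z : Fin (n+1) → ℝ => z 0) :=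
  (ContinuousLinearMap.proj (0 : Fin (n+1)) : (Fin (n+1) → ℝ) →L[ℝ] ℝ).differentiable

lemma diff_r2 : Differentiable ℝ (fun z : Fin (n+1) → ℝ => (z 0)^2) := by
  have := (diff_proj0 (n := n)).fun_mul (diff_proj0 (n := n))
  simpa [pow_two] using this

lemma pd_r2_zero (z : Fin (n+1) → ℝ) : pd (fun y : Fin (n+1) → ℝ => (y 0)^2) 0 z = 2 * z 0 := by
  have : (fun y : Fin (n+1) → ℝ => (y 0)^2) = fun y => y 0 * y 0 := by funext y; ring
  rw [this, pd_mul (diff_proj0 z) (diff_proj0 z), pd_proj]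
  simp; ring

lemma pd_r2_succ (k : Fin n) (z) : pd (fun y : Fin (n+1) → ℝ => (y 0)^2) k.succ z = 0 := by
  have : (fun y : Fin (n+1) → ℝ => (y 0)^2) = fun y => y 0 * y 0 := by funext y; ring
  rw [this, pd_mul (diff_proj0 z) (diff_proj0 z), pd_proj]
  rw [Pi.single_eq_of_ne (Fin.succ_ne_zero k).symm]
  ring

end calc2

section cone
variable {n : ℕ} (g : (Fin n → ℝ) → Matrix (Fin n) (Fin n) ℝ)

lemma cm00 (z) : coneMetric g z 0 0 = 1 := by simp [coneMetric]
lemma cm0s (j : Fin n) (z) : coneMetric g z 0 j.succ = 0 := by simp [coneMetric]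
lemma cms0 (i : Fin n) (z) : coneMetric g z i.succ 0 = 0 := by simp [coneMetric]
lemma cmss (i j : Fin n) (z) :
    coneMetric g z i.succ j.succ = (z 0)^2 * g (z ∘ Fin.succ) i j := by simp [coneMetric]

lemma pd_cm_00 (γ : Fin (n+1)) (z) : pd (fun y => coneMetric g y 0 0) γ z = 0 := by
  have : (fun y : Fin (n+1) → ℝ => coneMetric g y 0 0) = fun _ => (1:ℝ) := by
    funext y; simp [coneMetric]
  rw [this, pd_const]

lemma pd_cm_0s (j : Fin n) (γ : Fin (n+1)) (z) :
    pd (fun y => coneMetric g y 0 j.succ) γ z = 0 := by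
  have : (fun y : Fin (n+1) → ℝ => coneMetric g y 0 j.succ) = fun _ => (0:ℝ) := by
    funext y; simp [coneMetric]
  rw [this, pd_const]

lemma pd_cm_s0 (i : Fin n) (γ : Fin (n+1)) (z) :
    pd (fun y => coneMetric g y i.succ 0) γ z = 0 := by
  have : (fun y : Fin (n+1) → ℝ => coneMetric g y i.succ 0) = fun _ => (0:ℝ) := by
    funext y; simp [coneMetric]
  rw [this, pd_const]


lemma cm_fun (i j : Fin n) : (fun y : Fin (n+1) → ℝ => coneMetric g y i.succ j.succ)
    = fun y => (y 0)^2 * g (y ∘ Fin.succ) i j := by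
  funext y; simp [coneMetric]

lemma pd_cm_ss_zero (hgd : ∀ i j, Differentiable ℝ (fun x => g x i j)) (i j : Fin n) (z) :
    pd (fun y => coneMetric g y i.succ j.succ) 0 z = 2 * z 0 * g (z ∘ Fin.succ) i j := by
  rw [cm_fun, pd_mul (diff_r2 z) (diff_comp (hgd i j) z), pd_r2_zero,
    pd_comp_zero (hgd i j)]
  ring

lemma pd_cm_ss_succ (hgd : ∀ i j, Differentiable ℝ (fun x => g x i j)) (i j : Fin n) (k : Fin n) (z) :
    pd (fun y => coneMetric g y i.succ j.succ) k.succ z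
      = (z 0)^2 * pd (fun x => g x i j) k (z ∘ Fin.succ) := by
  rw [cm_fun, pd_mul (diff_r2 z) (diff_comp (hgd i j) z), pd_r2_succ,
    pd_comp_succ (hgd i j)]
  ring

end cone

section inv
variable {n : ℕ} (g : (Fin n → ℝ) → Matrix (Fin n) (Fin n) ℝ)

/-- Explicit inverse of the cone metric. -/
noncomputable def coneInv (z : Fin (n+1) → ℝ) : Matrix (Fin (n+1)) (Fin (n+1)) ℝ :=
  Matrix.of fun α β =>
    Fin.cases (Fin.cases (1 : ℝ) (fun _ => 0) β)
      (fun i => Fin.cases (0 : ℝ)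
        (fun j => ((z 0) ^ 2)⁻¹ * (g (z ∘ Fin.succ))⁻¹ i j) β) α

lemma coneMetric_inv {z : Fin (n+1) → ℝ} (hz : z 0 ≠ 0)
    (hdet : IsUnit (g (z ∘ Fin.succ)).det) :
    (coneMetric g z)⁻¹ = coneInv g z := by
  have hz2 : (z 0)^2 ≠ 0 := pow_ne_zero _ hz
  apply Matrix.inv_eq_right_inv
  ext α β
  rw [Matrix.mul_apply, Fin.sum_univ_succ]
  refine Fin.cases ?_ (fun i => ?_) α
  · refine Fin.cases ?_ (fun j => ?_) β <;>
      simp [coneMetric, coneInv, Matrix.one_apply, Fin.succ_ne_zero, (Fin.succ_ne_zero _).symm]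
  · refine Fin.cases ?_ (fun j => ?_) β
    · simp [coneMetric, coneInv, Matrix.one_apply, Fin.succ_ne_zero]
    · have key : ∑ k : Fin n, (z 0)^2 * g (z ∘ Fin.succ) i k
          * (((z 0)^2)⁻¹ * (g (z ∘ Fin.succ))⁻¹ k j)
          = ∑ k : Fin n, g (z ∘ Fin.succ) i k * (g (z ∘ Fin.succ))⁻¹ k j := by
        refine Finset.sum_congr rfl fun k _ => ?_
        field_simp
      simp only [coneMetric, coneInv, Matrix.of_apply, Fin.cases_zero, Fin.cases_succ]
      rw [zero_mul, zero_add, key, ← Matrix.mul_apply, Matrix.mul_nonsing_inv _ hdet,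
        Matrix.one_apply, Matrix.one_apply]
      simp [Fin.succ_inj]
end inv

section chris
variable {n : ℕ} (g : (Fin n → ℝ) → Matrix (Fin n) (Fin n) ℝ)
variable (hgd : ∀ i j, Differentiable ℝ (fun x => g x i j))
variable {z : Fin (n+1) → ℝ} (hz : z 0 ≠ 0) (hdet : IsUnit (g (z ∘ Fin.succ)).det)
include hgd hz hdet

lemma chris_zss (i k : Fin n) :
    christoffel (coneMetric g) 0 i.succ k.succ z = -(z 0) * g (z ∘ Fin.succ) i k := by
  rw [christoffel, coneMetric_inv g hz hdet, Fin.sum_univ_succ]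
  have h0 : ∀ j : Fin n, coneInv g z 0 j.succ = 0 := fun j => by simp [coneInv]
  simp only [h0, zero_mul, Finset.sum_const_zero, add_zero]
  rw [pd_cm_s0, pd_cm_s0, pd_cm_ss_zero g hgd]
  have h1 : coneInv g z 0 0 = 1 := by simp [coneInv]
  rw [h1]
  ring

lemma chris_zzs (j : Fin n) :
    christoffel (coneMetric g) 0 0 j.succ z = 0 := by
  rw [christoffel, coneMetric_inv g hz hdet, Fin.sum_univ_succ]
  have h0 : ∀ j : Fin n, coneInv g z 0 j.succ = 0 := fun j => by simp [coneInv]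
  simp only [h0, zero_mul, Finset.sum_const_zero, add_zero]
  rw [pd_cm_s0, pd_cm_00, pd_cm_0s]
  ring

lemma chris_szs (hgs : ∀ x, (g x)ᵀ = g x) (l j : Fin n) :
    christoffel (coneMetric g) l.succ 0 j.succ z
      = (z 0)⁻¹ * (if l = j then 1 else 0) := by
  rw [christoffel, coneMetric_inv g hz hdet, Fin.sum_univ_succ]
  have h0 : coneInv g z l.succ 0 = 0 := by simp [coneInv]
  rw [h0, zero_mul, zero_mul, zero_add]
  have key : ∀ k : Fin n, coneInv g z l.succ k.succ * (1/2)
      * (pd (fun y => coneMetric g y j.succ k.succ) 0 z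
        + pd (fun y => coneMetric g y 0 k.succ) j.succ z
        - pd (fun y => coneMetric g y 0 j.succ) k.succ z)
      = (z 0)⁻¹ * ((g (z ∘ Fin.succ))⁻¹ l k * g (z ∘ Fin.succ) k j) := by
    intro k
    rw [pd_cm_0s, pd_cm_0s, pd_cm_ss_zero g hgd]
    have h1 : coneInv g z l.succ k.succ = ((z 0)^2)⁻¹ * (g (z ∘ Fin.succ))⁻¹ l k := by
      simp [coneInv]
    have h2 : g (z ∘ Fin.succ) j k = g (z ∘ Fin.succ) k j :=
      congrFun (congrFun (hgs (z ∘ Fin.succ)) k) j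
    rw [h1, h2]
    field_simp
    ring
  rw [Finset.sum_congr rfl fun k _ => key k, ← Finset.mul_sum]
  congr 1
  rw [← Matrix.mul_apply, Matrix.nonsing_inv_mul _ hdet, Matrix.one_apply]

lemma chris_sss (l i j : Fin n) :
    christoffel (coneMetric g) l.succ i.succ j.succ z
      = christoffel g l i j (z ∘ Fin.succ) := by
  rw [christoffel, coneMetric_inv g hz hdet, Fin.sum_univ_succ]
  have h0 : coneInv g z l.succ 0 = 0 := by simp [coneInv]
  rw [h0, zero_mul, zero_mul, zero_add]
  rw [christoffel]
  refine Finset.sum_congr rfl fun k _ => ?_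
  rw [pd_cm_ss_succ g hgd, pd_cm_ss_succ g hgd, pd_cm_ss_succ g hgd]
  have h1 : coneInv g z l.succ k.succ = ((z 0)^2)⁻¹ * (g (z ∘ Fin.succ))⁻¹ l k := by
    simp [coneInv]
  rw [h1]
  have hz2 : (z 0)^2 ≠ 0 := pow_ne_zero _ hz
  field_simp
end chris

section tensor
variable {n : ℕ} (a : Fin n → Fin n → (Fin n → ℝ) → ℝ)
  (lam : Fin n → (Fin n → ℝ) → ℝ) (μ : (Fin n → ℝ) → ℝ)

lemma ct_00 (z) : coneTensor a lam μ 0 0 z = μ (z ∘ Fin.succ) := by simp [coneTensor]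
lemma ct_0s (j : Fin n) (z) :
    coneTensor a lam μ 0 j.succ z = -(z 0) * lam j (z ∘ Fin.succ) := by simp [coneTensor]
lemma ct_s0 (i : Fin n) (z) :
    coneTensor a lam μ i.succ 0 z = -(z 0) * lam i (z ∘ Fin.succ) := by simp [coneTensor]
lemma ct_ss (i j : Fin n) (z) :
    coneTensor a lam μ i.succ j.succ z = (z 0)^2 * a i j (z ∘ Fin.succ) := by
  simp [coneTensor]

lemma pd_neg' {m : ℕ} (u : (Fin m → ℝ) → ℝ) (i : Fin m) (x) :
    pd (fun y => -u y) i x = -pd u i x := by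
  simp [pd, fderiv_neg]

lemma diff_negproj : Differentiable ℝ (fun y : Fin (n+1) → ℝ => -(y 0)) := diff_proj0.neg

lemma pd_negproj_succ (j : Fin n) (z) :
    pd (fun y : Fin (n+1) → ℝ => -(y 0)) j.succ z = 0 := by
  have : (fun y : Fin (n+1) → ℝ => -(y 0)) = fun y => -(fun w : Fin (n+1) → ℝ => w 0) y := rfl
  rw [this, pd_neg', pd_proj, Pi.single_eq_of_ne (Fin.succ_ne_zero j).symm, neg_zero]

lemma pd_ct_00 (hmd : Differentiable ℝ μ) (k : Fin n) (z) :
    pd (coneTensor a lam μ 0 0) k.succ z = pd μ k (z ∘ Fin.succ) := by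
  have h : coneTensor a lam μ 0 0 = fun y => μ (y ∘ Fin.succ) := by
    funext y; simp [coneTensor]
  rw [h, pd_comp_succ hmd]

lemma pd_ct_s0 (i j : Fin n) (hld : Differentiable ℝ (lam i)) (z) :
    pd (coneTensor a lam μ i.succ 0) j.succ z = -(z 0) * pd (lam i) j (z ∘ Fin.succ) := by
  have h : coneTensor a lam μ i.succ 0
      = fun y => (fun w : Fin (n+1) → ℝ => -(w 0)) y * lam i (y ∘ Fin.succ) := by
    funext y; simp [coneTensor]
  rw [h, pd_mul (diff_negproj _) (diff_comp hld z), pd_negproj_succ, pd_comp_succ hld]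
  ring

lemma pd_ct_ss (i j k : Fin n) (had : Differentiable ℝ (a i j)) (z) :
    pd (coneTensor a lam μ i.succ j.succ) k.succ z
      = (z 0)^2 * pd (a i j) k (z ∘ Fin.succ) := by
  have h : coneTensor a lam μ i.succ j.succ
      = fun y => (fun w : Fin (n+1) → ℝ => (w 0)^2) y * a i j (y ∘ Fin.succ) := by
    funext y; simp [coneTensor]
  rw [h, pd_mul (diff_r2 _) (diff_comp had z), pd_r2_succ, pd_comp_succ had]
  ring

end tensor

/-- STATEMENT 17, in coordinates: if the tensor field
`A = [[μ, −rλᵀ],[−rλ, r² a]]` on the cone `(ℝ_{>0} × M, dr² + r² g)` is parallel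
w.r.t. the Levi-Civita connection of the cone metric, then `(a, λ, μ)` satisfies the
system `a_{ij,k} = λ_i g_{jk} + λ_j g_{ik}`, `λ_{i,j} = μ g_{ij} − a_{ij}`,
`μ_{,i} = −2 λ_i` on `M`. -/
theorem stmt_17 (n : ℕ) (g : (Fin n → ℝ) → Matrix (Fin n) (Fin n) ℝ)
    (hgsmooth : ∀ i j, ContDiff ℝ (⊤ : ℕ∞) (fun x => g x i j))
    (hgsymm : ∀ x, (g x)ᵀ = g x) (hginv : ∀ x, IsUnit (g x).det)
    (a : Fin n → Fin n → (Fin n → ℝ) → ℝ) (hasymm : ∀ i j x, a i j x = a j i x)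
    (hasmooth : ∀ i j, ContDiff ℝ (⊤ : ℕ∞) (a i j))
    (lam : Fin n → (Fin n → ℝ) → ℝ) (hlamsmooth : ∀ i, ContDiff ℝ (⊤ : ℕ∞) (lam i))
    (μ : (Fin n → ℝ) → ℝ) (hμsmooth : ContDiff ℝ (⊤ : ℕ∞) μ)
    (hparallel : ∀ z : Fin (n + 1) → ℝ, 0 < z 0 →
      ∀ α β γ, covDerivTwo (coneMetric g) (coneTensor a lam μ) α β γ z = 0) :
    (∀ x i j k, covDerivTwo g a i j k x = lam i x * g x j k + lam j x * g x i k) ∧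
    (∀ x i j, covDerivOne g lam i j x = μ x * g x i j - a i j x) ∧
    (∀ x i, pd μ i x = - 2 * lam i x) := by
  have hgd : ∀ i j, Differentiable ℝ fun x => g x i j :=
    fun i j => (hgsmooth i j).differentiable (by simp)
  have had : ∀ i j, Differentiable ℝ (a i j) := fun i j => (hasmooth i j).differentiable (by simp)
  have hld : ∀ i, Differentiable ℝ (lam i) := fun i => (hlamsmooth i).differentiable (by simp)
  have hmd : Differentiable ℝ μ := hμsmooth.differentiable (by simp)
  refine ⟨fun x i j k => ?_, fun x i j => ?_, fun x i => ?_⟩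
  · -- equation for a
    set z : Fin (n+1) → ℝ := Fin.cons 1 x with hzdef
    have hz0 : z 0 = 1 := rfl
    have hzs : z ∘ Fin.succ = x := funext fun j => rfl
    have hz : z 0 ≠ 0 := by rw [hz0]; norm_num
    have hdet : IsUnit (g (z ∘ Fin.succ)).det := by rw [hzs]; exact hginv x
    have h := hparallel z (by rw [hz0]; norm_num) i.succ j.succ k.succ
    rw [covDerivTwo] at h
    rw [pd_ct_ss a lam μ i j k (had i j)] at h
    simp only [Fin.sum_univ_succ, chris_zss g hgd hz hdet, chris_sss g hgd hz hdet,
      ct_0s, ct_s0, ct_ss] at h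
    rw [hz0, hzs] at h
    simp only [one_pow, one_mul] at h
    rw [covDerivTwo]
    ring_nf at h ⊢
    linarith [h]
  · -- equation for lam
    set z : Fin (n+1) → ℝ := Fin.cons 1 x with hzdef
    have hz0 : z 0 = 1 := rfl
    have hzs : z ∘ Fin.succ = x := funext fun j => rfl
    have hz : z 0 ≠ 0 := by rw [hz0]; norm_num
    have hdet : IsUnit (g (z ∘ Fin.succ)).det := by rw [hzs]; exact hginv x
    have h := hparallel z (by rw [hz0]; norm_num) i.succ 0 j.succ
    rw [covDerivTwo] at h
    rw [pd_ct_s0 a lam μ i j (hld i)] at h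
    simp only [Fin.sum_univ_succ, chris_zss g hgd hz hdet, chris_sss g hgd hz hdet,
      chris_zzs g hgd hz hdet, chris_szs g hgd hz hdet hgsymm,
      ct_00, ct_0s, ct_s0, ct_ss] at h
    rw [hz0, hzs] at h
    simp only [one_pow, one_mul, inv_one, zero_mul, ite_mul, zero_add,
      Finset.sum_ite_eq', Finset.mem_univ, if_true] at h
    simp only [neg_one_mul, mul_neg, Finset.sum_neg_distrib] at h
    rw [covDerivOne]
    ring_nf at h ⊢
    linarith [h]
  · -- equation for μ
    set z : Fin (n+1) → ℝ := Fin.cons 1 x with hzdef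
    have hz0 : z 0 = 1 := rfl
    have hzs : z ∘ Fin.succ = x := funext fun j => rfl
    have hz : z 0 ≠ 0 := by rw [hz0]; norm_num
    have hdet : IsUnit (g (z ∘ Fin.succ)).det := by rw [hzs]; exact hginv x
    have h := hparallel z (by rw [hz0]; norm_num) 0 0 i.succ
    rw [covDerivTwo] at h
    rw [pd_ct_00 a lam μ hmd] at h
    simp only [Fin.sum_univ_succ, chris_zzs g hgd hz hdet, chris_szs g hgd hz hdet hgsymm,
      ct_00, ct_0s, ct_s0] at h
    rw [hz0, hzs] at h
    simp only [one_pow, one_mul, inv_one, zero_mul, ite_mul, zero_add,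
      Finset.sum_ite_eq', Finset.mem_univ, if_true] at h
    ring_nf at h ⊢
    linarith [h]
end
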